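/- arXiv:1306.2089 — 2 statements merged into one kernel-verified Lean document; each statement's English description precedes it below -/
import Mathlib

section
/- Convolution theorem for the Clifford Fourier transform: for integrable f, g : ℝ³ → Cl(3,0), F{f ⋆ g}(ω) = F{f}(ω) F{g}(ω), where (f ⋆ g)(x) = ∫_{ℝ³} f(y) g(x − y) d³y and the product on the right is the (noncommutative) Clifford product. -/
open MeasureTheory Real Filter

noncomputable section

/-- The Clifford algebra Cl(3,0) as coefficient vectors over the basis
{1, e₁, e₂, e₃, e₁₂, e₃₁, e₂₃, e₁₂₃} (indices 0,…,7). -/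
abbrev Cl3 : Type := Fin 8 → ℝ

namespace Cl3

/-- Structure constants: e_i * e_j = sign • e_index. -/
def tbl : Fin 8 → Fin 8 → Fin 8 × ℝ :=
  ![![(0, 1), (1, 1), (2, 1), (3, 1), (4, 1), (5, 1), (6, 1), (7, 1)],
    ![(1, 1), (0, 1), (4, 1), (5, -1), (2, 1), (3, -1), (7, 1), (6, 1)],
    ![(2, 1), (4, -1), (0, 1), (6, 1), (1, -1), (7, 1), (3, 1), (5, 1)],
    ![(3, 1), (5, 1), (6, -1), (0, 1), (7, 1), (1, 1), (2, -1), (4, 1)],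
    ![(4, 1), (2, -1), (1, 1), (7, 1), (0, -1), (6, 1), (5, -1), (3, -1)],
    ![(5, 1), (3, 1), (7, 1), (1, -1), (6, -1), (0, -1), (4, 1), (2, -1)],
    ![(6, 1), (7, 1), (3, -1), (2, 1), (5, 1), (4, -1), (0, -1), (1, -1)],
    ![(7, 1), (6, 1), (5, 1), (4, 1), (3, -1), (2, -1), (1, -1), (0, -1)]]

/-- The geometric (Clifford) product on Cl(3,0). -/
def mul (x y : Cl3) : Cl3 := fun k =>
  ∑ i : Fin 8, ∑ j : Fin 8,
    (if (tbl i j).1 = k then (tbl i j).2 else 0) * x i * y j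

/-- The reverse anti-automorphism: negates the grade-2 and grade-3 parts. -/
def reverse (M : Cl3) : Cl3 := fun k => if 4 ≤ k.val then -M k else M k

/-- The scalar (grade-0) part. -/
def scalarPart (M : Cl3) : ℝ := M 0

/-- The square norm ‖M‖² = ⟨M M̃⟩₀. -/
def normSq (M : Cl3) : ℝ := scalarPart (mul M (reverse M))

/-- The identity 1 of Cl(3,0). -/
def one : Cl3 := fun k => if k = 0 then 1 else 0

/-- The unit pseudoscalar i₃ = e₁e₂e₃. -/
def i3 : Cl3 := fun k => if k = 7 then 1 else 0

/-- The orthonormal vector generators e₁, e₂, e₃. -/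
def e (i : Fin 3) : Cl3 := fun k => if k.val = i.val + 1 then 1 else 0

/-- Euclidean inner product on ℝ³. -/
def dot (a b : Fin 3 → ℝ) : ℝ := ∑ i, a i * b i

/-- The kernel e^{−i₃ θ} = cos θ − i₃ sin θ of the Clifford Fourier transform. -/
def expNeg (θ : ℝ) : Cl3 := Real.cos θ • one - Real.sin θ • i3

/-- e^{+i₃ θ} = cos θ + i₃ sin θ. -/
def expPos (θ : ℝ) : Cl3 := Real.cos θ • one + Real.sin θ • i3

/-- The Clifford Fourier transform F{f}(ω) = ∫ f(x) e^{−i₃ ω·x} d³x. -/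
def CFT (f : (Fin 3 → ℝ) → Cl3) (ω : Fin 3 → ℝ) : Cl3 :=
  ∫ x : Fin 3 → ℝ, mul (f x) (expNeg (dot ω x))

/-- Vector differential a·∇f (directional derivative in direction a). -/
def dirDeriv (a : Fin 3 → ℝ) (f : (Fin 3 → ℝ) → Cl3) (x : Fin 3 → ℝ) : Cl3 :=
  fderiv ℝ f x a

/-- Partial derivative ∂ₖ f. -/
def pderiv (k : Fin 3) (f : (Fin 3 → ℝ) → Cl3) (x : Fin 3 → ℝ) : Cl3 :=
  fderiv ℝ f x (Pi.single k 1)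

/-- The vector derivative ∇f = Σₖ eₖ ∂ₖ f. -/
def vecDeriv (f : (Fin 3 → ℝ) → Cl3) (x : Fin 3 → ℝ) : Cl3 :=
  ∑ k : Fin 3, mul (e k) (pderiv k f x)

/-- Convolution of Cl(3,0)-valued functions. -/
def conv (f g : (Fin 3 → ℝ) → Cl3) (x : Fin 3 → ℝ) : Cl3 :=
  ∫ y : Fin 3 → ℝ, mul (f y) (g (x - y))

end Cl3


namespace Cl3

@[simp] lemma tbl_00 : tbl 0 0 = (0, 1) := rfl
@[simp] lemma tbl_01 : tbl 0 1 = (1, 1) := rfl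
@[simp] lemma tbl_02 : tbl 0 2 = (2, 1) := rfl
@[simp] lemma tbl_03 : tbl 0 3 = (3, 1) := rfl
@[simp] lemma tbl_04 : tbl 0 4 = (4, 1) := rfl
@[simp] lemma tbl_05 : tbl 0 5 = (5, 1) := rfl
@[simp] lemma tbl_06 : tbl 0 6 = (6, 1) := rfl
@[simp] lemma tbl_07 : tbl 0 7 = (7, 1) := rfl
@[simp] lemma tbl_10 : tbl 1 0 = (1, 1) := rfl
@[simp] lemma tbl_11 : tbl 1 1 = (0, 1) := rfl
@[simp] lemma tbl_12 : tbl 1 2 = (4, 1) := rfl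
@[simp] lemma tbl_13 : tbl 1 3 = (5, -1) := rfl
@[simp] lemma tbl_14 : tbl 1 4 = (2, 1) := rfl
@[simp] lemma tbl_15 : tbl 1 5 = (3, -1) := rfl
@[simp] lemma tbl_16 : tbl 1 6 = (7, 1) := rfl
@[simp] lemma tbl_17 : tbl 1 7 = (6, 1) := rfl
@[simp] lemma tbl_20 : tbl 2 0 = (2, 1) := rfl
@[simp] lemma tbl_21 : tbl 2 1 = (4, -1) := rfl
@[simp] lemma tbl_22 : tbl 2 2 = (0, 1) := rfl
@[simp] lemma tbl_23 : tbl 2 3 = (6, 1) := rfl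
@[simp] lemma tbl_24 : tbl 2 4 = (1, -1) := rfl
@[simp] lemma tbl_25 : tbl 2 5 = (7, 1) := rfl
@[simp] lemma tbl_26 : tbl 2 6 = (3, 1) := rfl
@[simp] lemma tbl_27 : tbl 2 7 = (5, 1) := rfl
@[simp] lemma tbl_30 : tbl 3 0 = (3, 1) := rfl
@[simp] lemma tbl_31 : tbl 3 1 = (5, 1) := rfl
@[simp] lemma tbl_32 : tbl 3 2 = (6, -1) := rfl
@[simp] lemma tbl_33 : tbl 3 3 = (0, 1) := rfl
@[simp] lemma tbl_34 : tbl 3 4 = (7, 1) := rfl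
@[simp] lemma tbl_35 : tbl 3 5 = (1, 1) := rfl
@[simp] lemma tbl_36 : tbl 3 6 = (2, -1) := rfl
@[simp] lemma tbl_37 : tbl 3 7 = (4, 1) := rfl
@[simp] lemma tbl_40 : tbl 4 0 = (4, 1) := rfl
@[simp] lemma tbl_41 : tbl 4 1 = (2, -1) := rfl
@[simp] lemma tbl_42 : tbl 4 2 = (1, 1) := rfl
@[simp] lemma tbl_43 : tbl 4 3 = (7, 1) := rfl
@[simp] lemma tbl_44 : tbl 4 4 = (0, -1) := rfl
@[simp] lemma tbl_45 : tbl 4 5 = (6, 1) := rfl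
@[simp] lemma tbl_46 : tbl 4 6 = (5, -1) := rfl
@[simp] lemma tbl_47 : tbl 4 7 = (3, -1) := rfl
@[simp] lemma tbl_50 : tbl 5 0 = (5, 1) := rfl
@[simp] lemma tbl_51 : tbl 5 1 = (3, 1) := rfl
@[simp] lemma tbl_52 : tbl 5 2 = (7, 1) := rfl
@[simp] lemma tbl_53 : tbl 5 3 = (1, -1) := rfl
@[simp] lemma tbl_54 : tbl 5 4 = (6, -1) := rfl
@[simp] lemma tbl_55 : tbl 5 5 = (0, -1) := rfl
@[simp] lemma tbl_56 : tbl 5 6 = (4, 1) := rfl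
@[simp] lemma tbl_57 : tbl 5 7 = (2, -1) := rfl
@[simp] lemma tbl_60 : tbl 6 0 = (6, 1) := rfl
@[simp] lemma tbl_61 : tbl 6 1 = (7, 1) := rfl
@[simp] lemma tbl_62 : tbl 6 2 = (3, -1) := rfl
@[simp] lemma tbl_63 : tbl 6 3 = (2, 1) := rfl
@[simp] lemma tbl_64 : tbl 6 4 = (5, 1) := rfl
@[simp] lemma tbl_65 : tbl 6 5 = (4, -1) := rfl
@[simp] lemma tbl_66 : tbl 6 6 = (0, -1) := rfl
@[simp] lemma tbl_67 : tbl 6 7 = (1, -1) := rfl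
@[simp] lemma tbl_70 : tbl 7 0 = (7, 1) := rfl
@[simp] lemma tbl_71 : tbl 7 1 = (6, 1) := rfl
@[simp] lemma tbl_72 : tbl 7 2 = (5, 1) := rfl
@[simp] lemma tbl_73 : tbl 7 3 = (4, 1) := rfl
@[simp] lemma tbl_74 : tbl 7 4 = (3, -1) := rfl
@[simp] lemma tbl_75 : tbl 7 5 = (2, -1) := rfl
@[simp] lemma tbl_76 : tbl 7 6 = (1, -1) := rfl
@[simp] lemma tbl_77 : tbl 7 7 = (0, -1) := rfl

lemma mul_add_left (a b c : Cl3) : mul (a + b) c = mul a c + mul b c := by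
  funext k; simp [mul, add_mul, mul_add, Finset.sum_add_distrib]
lemma mul_add_right (a b c : Cl3) : mul a (b + c) = mul a b + mul a c := by
  funext k; simp [mul, add_mul, mul_add, Finset.sum_add_distrib]
lemma mul_smul_left (r : ℝ) (a b : Cl3) : mul (r • a) b = r • mul a b := by
  funext k; simp [mul, Finset.mul_sum, mul_assoc, mul_left_comm]
lemma mul_smul_right (r : ℝ) (a b : Cl3) : mul a (r • b) = r • mul a b := by
  funext k; simp [mul, Finset.mul_sum, mul_assoc, mul_left_comm]
lemma mul_sub_left (a b c : Cl3) : mul (a - b) c = mul a c - mul b c := by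
  funext k; simp [mul, sub_mul, mul_sub, Finset.sum_sub_distrib]
lemma mul_sub_right (a b c : Cl3) : mul a (b - c) = mul a b - mul a c := by
  funext k; simp [mul, sub_mul, mul_sub, Finset.sum_sub_distrib]

set_option maxHeartbeats 1000000 in
lemma mul_one' (a : Cl3) : mul a one = a := by
  funext k; fin_cases k <;> · simp [mul, one, Fin.sum_univ_eight]

set_option maxHeartbeats 2000000 in
lemma assocL (a b : Cl3) : mul (mul a i3) b = mul (mul a b) i3 := by
  funext k; fin_cases k <;> · simp [mul, i3, Fin.sum_univ_eight]; try ring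

set_option maxHeartbeats 2000000 in
lemma assocR (a b : Cl3) : mul a (mul b i3) = mul (mul a b) i3 := by
  funext k; fin_cases k <;> · simp [mul, i3, Fin.sum_univ_eight]; try ring

set_option maxHeartbeats 2000000 in
lemma i3sq (a : Cl3) : mul (mul a i3) i3 = -a := by
  funext k; fin_cases k <;> · simp [mul, i3, Fin.sum_univ_eight]

lemma mul_expNeg' (a : Cl3) (θ : ℝ) :
    mul a (expNeg θ) = Real.cos θ • a - Real.sin θ • mul a i3 := by
  rw [expNeg, mul_sub_right, mul_smul_right, mul_smul_right, mul_one']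

lemma key (a b : Cl3) (s t : ℝ) :
    mul (mul a b) (expNeg (s + t)) = mul (mul a (expNeg s)) (mul b (expNeg t)) := by
  rw [mul_expNeg', mul_expNeg', mul_expNeg', mul_sub_left, mul_smul_left, mul_smul_left,
    mul_sub_right, mul_sub_right, mul_smul_right, mul_smul_right, mul_smul_right, mul_smul_right,
    assocR, assocL, assocR, assocL, i3sq, Real.cos_add, Real.sin_add]
  module

/-- `mul` as a continuous bilinear map. -/
def mulCLM : Cl3 →L[ℝ] Cl3 →L[ℝ] Cl3 :=
  LinearMap.toContinuousLinearMap
    { toFun := fun x => LinearMap.toContinuousLinearMap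
        { toFun := mul x
          map_add' := fun b c => mul_add_right x b c
          map_smul' := fun r b => mul_smul_right r x b }
      map_add' := fun x y => by ext z; exact congrFun (mul_add_left x y z) _
      map_smul' := fun r x => by ext z; exact congrFun (mul_smul_left r x z) _ }

@[simp] lemma mulCLM_apply (a b : Cl3) : mulCLM a b = mul a b := rfl

lemma norm_expNeg_le (θ : ℝ) : ‖expNeg θ‖ ≤ 1 := by
  rw [pi_norm_le_iff_of_nonneg zero_le_one]
  intro k
  fin_cases k <;>
    simp [expNeg, one, i3, Real.norm_eq_abs, abs_cos_le_one, abs_sin_le_one,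
      Real.abs_cos_le_one, Real.abs_sin_le_one]

lemma continuous_expNeg_dot (ω : Fin 3 → ℝ) :
    Continuous fun x : Fin 3 → ℝ => expNeg (dot ω x) := by
  have hdot : Continuous fun x : Fin 3 → ℝ => dot ω x := by
    unfold dot
    exact continuous_finset_sum _ fun i _ => (continuous_const.mul (continuous_apply i))
  unfold expNeg
  exact ((Real.continuous_cos.comp hdot).smul continuous_const).sub
    ((Real.continuous_sin.comp hdot).smul continuous_const)

lemma integrable_mul_expNeg {f : (Fin 3 → ℝ) → Cl3} (hf : Integrable f) (ω : Fin 3 → ℝ) :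
    Integrable (fun y => mul (f y) (expNeg (dot ω y))) := by
  have hm : AEStronglyMeasurable (fun y => mulCLM (f y) (expNeg (dot ω y)))
      (volume : Measure (Fin 3 → ℝ)) :=
    mulCLM.aestronglyMeasurable_comp₂ hf.aestronglyMeasurable
      (continuous_expNeg_dot ω).aestronglyMeasurable
  refine (hf.norm.const_mul ‖mulCLM‖).mono' hm (Filter.Eventually.of_forall fun y => ?_)
  calc ‖mulCLM (f y) (expNeg (dot ω y))‖
      ≤ ‖mulCLM‖ * ‖f y‖ * ‖expNeg (dot ω y)‖ := mulCLM.le_opNorm₂ _ _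
    _ ≤ ‖mulCLM‖ * ‖f y‖ * 1 := by
        have := norm_expNeg_le (dot ω y)
        have h1 : (0:ℝ) ≤ ‖mulCLM‖ * ‖f y‖ := by positivity
        nlinarith
    _ = ‖mulCLM‖ * ‖f y‖ := mul_one _

lemma dot_split (ω x y : Fin 3 → ℝ) : dot ω x = dot ω y + dot ω (x - y) := by
  unfold dot
  rw [← Finset.sum_add_distrib]
  refine Finset.sum_congr rfl fun i _ => ?_
  simp [Pi.sub_apply]; ring

end Cl3

open Cl3

/-- Convolution theorem: F{f ⋆ g}(ω) = F{f}(ω) F{g}(ω). -/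
theorem CFT_conv (f g : (Fin 3 → ℝ) → Cl3)
    (hf : Integrable f) (hg : Integrable g) (ω : Fin 3 → ℝ) :
    CFT (conv f g) ω = mul (CFT f ω) (CFT g ω) := by
  classical
  set E : (Fin 3 → ℝ) → Cl3 := fun x => expNeg (dot ω x) with hE
  set F : (Fin 3 → ℝ) → Cl3 := fun y => mul (f y) (E y) with hF
  set G : (Fin 3 → ℝ) → Cl3 := fun y => mul (g y) (E y) with hG
  have hFi : Integrable F := integrable_mul_expNeg hf ω
  have hGi : Integrable G := integrable_mul_expNeg hg ω
  have hae : ∀ᵐ x : Fin 3 → ℝ ∂volume, ConvolutionExistsAt f g x mulCLM volume :=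
    hf.ae_convolution_exists mulCLM hg
  have h1 : ∀ᵐ x : Fin 3 → ℝ ∂volume,
      mul (conv f g x) (E x) = MeasureTheory.convolution F G mulCLM volume x := by
    filter_upwards [hae] with x hx
    have hxint : Integrable (fun y => mulCLM (f y) (g (x - y))) := hx
    have step1 : mul (conv f g x) (E x)
        = ∫ y, (mulCLM.flip (E x)) (mulCLM (f y) (g (x - y))) := by
      have := ((mulCLM.flip (E x)).integral_comp_comm hxint).symm
      simpa [conv] using this
    rw [step1]
    rw [MeasureTheory.convolution]
    refine integral_congr_ae (Filter.Eventually.of_forall fun y => ?_)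
    show mul (mul (f y) (g (x - y))) (E x) = mul (F y) (G (x - y))
    rw [hF, hG]
    simp only [hE]
    rw [dot_split ω x y]
    exact key (f y) (g (x - y)) (dot ω y) (dot ω (x - y))
  calc CFT (conv f g) ω = ∫ x, mul (conv f g x) (E x) := rfl
    _ = ∫ x, MeasureTheory.convolution F G mulCLM volume x := integral_congr_ae h1
    _ = mulCLM (∫ y, F y) (∫ y, G y) := MeasureTheory.integral_convolution mulCLM hFi hGi
    _ = mul (CFT f ω) (CFT g ω) := rfl
end
end

section
/- Equality in the directional uncertainty principle holds for Gaussian multivector functions: if f(x) = C₀ e^{−k x²} with C₀ ∈ Cl(3,0) a constant multivector and k > 0 (x² = |x|² being the Euclidean squared norm), then for any unit vector a ∈ ℝ³, (∫ (a·x)² ‖f(x)‖² d³x)(∫ (a·ω)² ‖F{f}(ω)‖² d³ω) = (2π)³ F²/4, where F = ∫ ‖f(x)‖² d³x. -/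
open MeasureTheory Real Filter

noncomputable section

open Cl3

/-!
The Clifford Fourier kernel is `e^{-i₃θ} = cos θ - i₃ sin θ`, so for a real function `g` the
transform of `g C₀` is `(∫ g cos) C₀ - (∫ g sin) C₀ i₃`. For the Gaussian these are the real and
imaginary parts of the complex Gaussian Fourier integral, so the sine part vanishes and
`F{f}(ω) = (π/k)^{3/2} e^{-ω²/(4k)} C₀` is again a Gaussian. Since `‖c M‖² = c² ‖M‖²` for real
`c`, all three integrals are Gaussian moments, which factor over the coordinates; the mixed moments
vanish, leaving `∫ (a·x)² e^{-c x²} d³x = (π/c)^{3/2} / (2c)` for a unit vector `a`. Taking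
`c = 2k` in position space and `c = 1/(2k)` in frequency space gives the product `(2π)³ F² / 4`.
-/

lemma integral_mul_exp_neg_mul_sq_eq_zero (b : ℝ) : ∫ t : ℝ, t * exp (-b * t ^ 2) = 0 := by
  have h := integral_neg_eq_self (fun t : ℝ => t * exp (-b * t ^ 2)) volume
  simp only [neg_sq, neg_mul, integral_neg] at h
  simp only [neg_mul]
  linarith

lemma integral_sq_mul_exp_neg_mul_sq {b : ℝ} (hb : 0 < b) :
    ∫ t : ℝ, t ^ 2 * exp (-b * t ^ 2) = √(π / b) / (2 * b) := by
  have h := integral_rpow_mul_exp_neg_mul_rpow two_pos (by norm_num : (-1 : ℝ) < 2) hb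
  have hΓ : Gamma ((2 + 1) / 2) = √π / 2 := by
    rw [show ((2 : ℝ) + 1) / 2 = 1 / 2 + 1 by norm_num, Gamma_add_one (by norm_num),
      Gamma_one_half_eq]
    ring
  have hb32 : b ^ (-((2 : ℝ) + 1) / 2) = (b * √b)⁻¹ := by
    rw [show -((2 : ℝ) + 1) / 2 = -(1 + 1 / 2) by norm_num, rpow_neg hb.le, rpow_add hb,
      rpow_one, ← sqrt_eq_rpow]
  simp only [rpow_two, hΓ, hb32] at h
  have h_abs : (fun t : ℝ => t ^ 2 * exp (-b * t ^ 2)) =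
      fun t => (fun s : ℝ => s ^ 2 * exp (-b * s ^ 2)) |t| := by
    simp only [sq_abs]
  rw [h_abs, integral_comp_abs (f := fun s : ℝ => s ^ 2 * exp (-b * s ^ 2)), h, sqrt_div pi_pos.le]
  field_simp

lemma integrable_sq_mul_exp_neg_mul_sq {b : ℝ} (hb : 0 < b) :
    Integrable fun t : ℝ => t ^ 2 * exp (-b * t ^ 2) := by
  simpa using integrable_rpow_mul_exp_neg_mul_sq hb (by norm_num : (-1 : ℝ) < 2)

section GaussianMoments

variable {ι : Type*} [Fintype ι]

lemma exp_neg_mul_sum_sq (b : ℝ) (x : ι → ℝ) :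
    exp (-b * ∑ i, x i ^ 2) = ∏ i, exp (-b * x i ^ 2) := by
  rw [Finset.mul_sum, exp_sum]

lemma integral_exp_neg_mul_sum_sq (b : ℝ) :
    ∫ x : ι → ℝ, exp (-b * ∑ i, x i ^ 2) = √(π / b) ^ Fintype.card ι := by
  simp_rw [exp_neg_mul_sum_sq]
  rw [integral_fintype_prod_volume_eq_pow (fun t : ℝ => exp (-b * t ^ 2)), integral_gaussian]

lemma mul_mul_exp_neg_mul_sum_sq_eq_prod [DecidableEq ι] (b : ℝ) (i j : ι) (x : ι → ℝ) :
    x i * x j * exp (-b * ∑ l, x l ^ 2) =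
      ∏ l, (if l = i then x l else 1) * (if l = j then x l else 1) * exp (-b * x l ^ 2) := by
  simp only [Finset.prod_mul_distrib, Finset.prod_ite_eq', Finset.mem_univ, if_true,
    exp_neg_mul_sum_sq]

lemma integrable_mul_mul_exp_neg_mul_sum_sq [DecidableEq ι] {b : ℝ} (hb : 0 < b) (i j : ι) :
    Integrable fun x : ι → ℝ => x i * x j * exp (-b * ∑ l, x l ^ 2) := by
  simp_rw [mul_mul_exp_neg_mul_sum_sq_eq_prod]
  refine Integrable.fintype_prod
    (f := fun l t => (if l = i then t else 1) * (if l = j then t else 1) * exp (-b * t ^ 2))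
    fun l => ?_
  split_ifs
  · simpa only [← sq] using integrable_sq_mul_exp_neg_mul_sq hb
  · simpa only [mul_one] using integrable_mul_exp_neg_mul_sq hb
  · simpa only [one_mul] using integrable_mul_exp_neg_mul_sq hb
  · simpa only [one_mul] using integrable_exp_neg_mul_sq hb

lemma integral_mul_mul_exp_neg_mul_sum_sq [DecidableEq ι] {b : ℝ} (hb : 0 < b) (i j : ι) :
    ∫ x : ι → ℝ, x i * x j * exp (-b * ∑ l, x l ^ 2) =
      if i = j then √(π / b) ^ Fintype.card ι / (2 * b) else 0 := by
  simp_rw [mul_mul_exp_neg_mul_sum_sq_eq_prod]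
  rw [integral_fintype_prod_volume_eq_prod
    (fun l t => (if l = i then t else 1) * (if l = j then t else 1) * exp (-b * t ^ 2))]
  split_ifs with hij
  · subst hij
    have h_factor (l : ι) : ∫ t : ℝ, (if l = i then t else 1) * (if l = i then t else 1) *
        exp (-b * t ^ 2) = (if l = i then 1 / (2 * b) else 1) * √(π / b) := by
      split_ifs
      · simp only [← sq, integral_sq_mul_exp_neg_mul_sq hb]
        ring
      · simp only [one_mul, integral_gaussian]
    simp only [h_factor, Finset.prod_mul_distrib, Finset.prod_ite_eq', Finset.mem_univ, if_true,
      Finset.prod_const, Finset.card_univ]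
    ring
  · refine Finset.prod_eq_zero (Finset.mem_univ i) ?_
    simp only [if_true, if_neg hij, mul_one, integral_mul_exp_neg_mul_sq_eq_zero]

lemma integral_sq_sum_mul_mul_exp_neg_mul_sum_sq {b : ℝ} (hb : 0 < b) (a : ι → ℝ) :
    ∫ x : ι → ℝ, (∑ i, a i * x i) ^ 2 * exp (-b * ∑ i, x i ^ 2) =
      (∑ i, a i ^ 2) * (√(π / b) ^ Fintype.card ι / (2 * b)) := by
  classical
  have h_expand (x : ι → ℝ) : (∑ i, a i * x i) ^ 2 * exp (-b * ∑ i, x i ^ 2) =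
      ∑ i, ∑ j, a i * a j * (x i * x j * exp (-b * ∑ l, x l ^ 2)) := by
    rw [sq, Finset.sum_mul_sum, Finset.sum_mul]
    refine Finset.sum_congr rfl fun i _ => ?_
    rw [Finset.sum_mul]
    exact Finset.sum_congr rfl fun j _ => by ring
  have h_int (i j : ι) := (integrable_mul_mul_exp_neg_mul_sum_sq hb i j).const_mul (a i * a j)
  simp_rw [h_expand]
  rw [integral_finsetSum _ fun i _ => integrable_finsetSum _ fun j _ => h_int i j]
  simp_rw [integral_finsetSum _ fun j _ => h_int _ j, integral_const_mul,
    integral_mul_mul_exp_neg_mul_sum_sq hb, mul_ite, mul_zero, Finset.sum_ite_eq,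
    Finset.mem_univ, if_true, Finset.sum_mul, sq]

end GaussianMoments

section GaussianFourier

variable {ι : Type*} [Fintype ι]

lemma ofReal_cpow_natCast_div_two {r : ℝ} (hr : 0 ≤ r) (n : ℕ) :
    (r : ℂ) ^ ((n : ℂ) / 2) = ((√r ^ n : ℝ) : ℂ) := by
  rw [sqrt_eq_rpow, ← rpow_natCast, ← rpow_mul hr, Complex.ofReal_cpow hr]
  push_cast
  ring_nf

def gaussianWave (b : ℝ) (ω x : ι → ℝ) : ℂ :=
  Complex.exp (-(b : ℂ) * ∑ i, (x i : ℂ) ^ 2 + ∑ i, -(ω i : ℂ) * Complex.I * x i)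

lemma gaussianWave_eq (b : ℝ) (ω x : ι → ℝ) :
    gaussianWave b ω x = Complex.exp (((-b * ∑ i, x i ^ 2 : ℝ) : ℂ) +
      ((-∑ i, ω i * x i : ℝ) : ℂ) * Complex.I) := by
  simp only [gaussianWave]
  push_cast
  simp only [neg_mul, Finset.sum_mul, Finset.sum_neg_distrib, mul_right_comm _ Complex.I]

lemma gaussianWave_re (b : ℝ) (ω x : ι → ℝ) :
    (gaussianWave b ω x).re = exp (-b * ∑ i, x i ^ 2) * cos (∑ i, ω i * x i) := by
  simp only [gaussianWave_eq, Complex.exp_re, Complex.add_re, Complex.add_im, Complex.ofReal_re,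
    Complex.ofReal_im, Complex.mul_I_re, Complex.mul_I_im, neg_zero, add_zero, zero_add, cos_neg]

lemma gaussianWave_im (b : ℝ) (ω x : ι → ℝ) :
    (gaussianWave b ω x).im = -(exp (-b * ∑ i, x i ^ 2) * sin (∑ i, ω i * x i)) := by
  simp only [gaussianWave_eq, Complex.exp_im, Complex.add_re, Complex.add_im, Complex.ofReal_re,
    Complex.ofReal_im, Complex.mul_I_re, Complex.mul_I_im, neg_zero, add_zero, zero_add, sin_neg,
    mul_neg]

lemma integrable_gaussianWave {b : ℝ} (hb : 0 < b) (ω : ι → ℝ) :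
    Integrable (gaussianWave b ω) :=
  GaussianFourier.integrable_cexp_neg_mul_sum_add (by simpa using hb) _

lemma integral_gaussianWave {b : ℝ} (hb : 0 < b) (ω : ι → ℝ) :
    ∫ x, gaussianWave b ω x =
      ((√(π / b) ^ Fintype.card ι * exp (-(∑ i, ω i ^ 2) / (4 * b)) : ℝ) : ℂ) := by
  simp only [gaussianWave]
  rw [GaussianFourier.integral_cexp_neg_mul_sum_add (by simpa using hb),
    ← Complex.ofReal_div, ofReal_cpow_natCast_div_two (by positivity)]
  push_cast
  congr 2
  simp only [mul_pow, Complex.I_sq, neg_sq, mul_neg, mul_one, Finset.sum_neg_distrib]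

lemma integrable_exp_neg_mul_sum_sq_mul_cos {b : ℝ} (hb : 0 < b) (ω : ι → ℝ) :
    Integrable fun x : ι → ℝ => exp (-b * ∑ i, x i ^ 2) * cos (∑ i, ω i * x i) := by
  simpa only [RCLike.re_to_complex, gaussianWave_re] using (integrable_gaussianWave hb ω).re

lemma integrable_exp_neg_mul_sum_sq_mul_sin {b : ℝ} (hb : 0 < b) (ω : ι → ℝ) :
    Integrable fun x : ι → ℝ => exp (-b * ∑ i, x i ^ 2) * sin (∑ i, ω i * x i) := by
  have h := (integrable_gaussianWave hb ω).im.neg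
  simpa only [RCLike.im_to_complex, gaussianWave_im, Pi.neg_def, neg_neg] using h

lemma integral_exp_neg_mul_sum_sq_mul_cos {b : ℝ} (hb : 0 < b) (ω : ι → ℝ) :
    ∫ x : ι → ℝ, exp (-b * ∑ i, x i ^ 2) * cos (∑ i, ω i * x i) =
      √(π / b) ^ Fintype.card ι * exp (-(∑ i, ω i ^ 2) / (4 * b)) := by
  have h := integral_re (integrable_gaussianWave hb ω)
  simpa only [RCLike.re_to_complex, gaussianWave_re, integral_gaussianWave hb,
    Complex.ofReal_re] using h

lemma integral_exp_neg_mul_sum_sq_mul_sin {b : ℝ} (hb : 0 < b) (ω : ι → ℝ) :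
    ∫ x : ι → ℝ, exp (-b * ∑ i, x i ^ 2) * sin (∑ i, ω i * x i) = 0 := by
  have h := integral_im (integrable_gaussianWave hb ω)
  simp only [RCLike.im_to_complex, gaussianWave_im, integral_neg, integral_gaussianWave hb,
    Complex.ofReal_im] at h
  linarith

end GaussianFourier

namespace Cl3

lemma tbl_zero_right (i : Fin 8) : tbl i 0 = (i, 1) := by
  fin_cases i <;> rfl

lemma mul_one_right (x : Cl3) : mul x one = x := by
  funext m
  simp [mul, one, tbl_zero_right]

lemma smul_mul_left (c : ℝ) (x y : Cl3) : mul (c • x) y = c • mul x y := by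
  funext m
  simp only [mul, Pi.smul_apply, smul_eq_mul, Finset.mul_sum]
  exact Finset.sum_congr rfl fun i _ => Finset.sum_congr rfl fun j _ => by ring

lemma mul_smul_right_s18 (c : ℝ) (x y : Cl3) : mul x (c • y) = c • mul x y := by
  funext m
  simp only [mul, Pi.smul_apply, smul_eq_mul, Finset.mul_sum]
  exact Finset.sum_congr rfl fun i _ => Finset.sum_congr rfl fun j _ => by ring

lemma mul_sub_right_s18 (x y z : Cl3) : mul x (y - z) = mul x y - mul x z := by
  funext m
  simp only [mul, Pi.sub_apply, ← Finset.sum_sub_distrib]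
  exact Finset.sum_congr rfl fun i _ => Finset.sum_congr rfl fun j _ => by ring

lemma reverse_smul (c : ℝ) (x : Cl3) : reverse (c • x) = c • reverse x := by
  funext m
  simp only [reverse, Pi.smul_apply, smul_eq_mul]
  split_ifs <;> ring

lemma normSq_smul (c : ℝ) (x : Cl3) : normSq (c • x) = c ^ 2 * normSq x := by
  simp only [normSq, scalarPart, reverse_smul, smul_mul_left, mul_smul_right_s18, Pi.smul_apply,
    smul_eq_mul]
  ring

lemma dot_self_eq_sum_sq (x : Fin 3 → ℝ) : dot x x = ∑ i, x i ^ 2 := by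
  simp only [dot, sq]

lemma CFT_smul_const (g : (Fin 3 → ℝ) → ℝ) (C : Cl3) (ω : Fin 3 → ℝ)
    (hcos : Integrable fun x => g x * cos (dot ω x))
    (hsin : Integrable fun x => g x * sin (dot ω x)) :
    CFT (fun x => g x • C) ω =
      (∫ x, g x * cos (dot ω x)) • C - (∫ x, g x * sin (dot ω x)) • mul C i3 := by
  have h_integrand (x : Fin 3 → ℝ) : mul (g x • C) (expNeg (dot ω x)) =
      (g x * cos (dot ω x)) • C - (g x * sin (dot ω x)) • mul C i3 := by
    rw [expNeg, smul_mul_left, mul_sub_right_s18, mul_smul_right_s18, mul_smul_right_s18, mul_one_right,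
      smul_sub, smul_smul, smul_smul]
  simp only [CFT, h_integrand]
  rw [integral_sub (hcos.smul_const C) (hsin.smul_const _), integral_smul_const,
    integral_smul_const]

lemma exp_neg_mul_dot_self (k : ℝ) (x : Fin 3 → ℝ) :
    exp (-(k * dot x x)) = exp (-k * ∑ i, x i ^ 2) := by
  rw [dot_self_eq_sum_sq, neg_mul]

lemma CFT_gaussian {k : ℝ} (hk : 0 < k) (C : Cl3) (ω : Fin 3 → ℝ) :
    CFT (fun x => exp (-(k * dot x x)) • C) ω =
      (√(π / k) ^ 3 * exp (-(∑ i, ω i ^ 2) / (4 * k))) • C := by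
  simp only [exp_neg_mul_dot_self]
  rw [CFT_smul_const _ _ _ (integrable_exp_neg_mul_sum_sq_mul_cos hk ω)
    (integrable_exp_neg_mul_sum_sq_mul_sin hk ω)]
  simp only [dot, integral_exp_neg_mul_sum_sq_mul_cos hk, integral_exp_neg_mul_sum_sq_mul_sin hk,
    zero_smul, sub_zero, Fintype.card_fin]

lemma normSq_gaussian (k : ℝ) (C : Cl3) (x : Fin 3 → ℝ) :
    normSq (exp (-(k * dot x x)) • C) = exp (-(2 * k) * ∑ i, x i ^ 2) * normSq C := by
  rw [normSq_smul, exp_neg_mul_dot_self, ← exp_nat_mul]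
  ring_nf

lemma normSq_CFT_gaussian {k : ℝ} (hk : 0 < k) (C : Cl3) (ω : Fin 3 → ℝ) :
    normSq (CFT (fun x => exp (-(k * dot x x)) • C) ω) =
      (π / k) ^ 3 * (exp (-(2 * k)⁻¹ * ∑ i, ω i ^ 2) * normSq C) := by
  rw [CFT_gaussian hk, normSq_smul, mul_pow, ← pow_mul, ← exp_nat_mul,
    show √(π / k) ^ (3 * 2) = (π / k) ^ 3 by rw [pow_mul', sq_sqrt (by positivity)]]
  field_simp
  ring_nf

lemma integral_sq_dot_mul_exp_neg_mul_sum_sq {c : ℝ} (hc : 0 < c) {a : Fin 3 → ℝ}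
    (ha : dot a a = 1) :
    ∫ x : Fin 3 → ℝ, dot a x ^ 2 * exp (-c * ∑ i, x i ^ 2) = √(π / c) ^ 3 / (2 * c) := by
  rw [dot_self_eq_sum_sq] at ha
  simp only [dot]
  rw [integral_sq_sum_mul_mul_exp_neg_mul_sum_sq hc, ha, one_mul, Fintype.card_fin]

end Cl3

lemma gaussian_uncertainty_constant {k : ℝ} (hk : 0 < k) (N : ℝ) :
    (π / k) ^ 3 * (√(π / (2 * k)) ^ 3 / (2 * (2 * k)) * N *
        (√(π / (2 * k)⁻¹) ^ 3 / (2 * (2 * k)⁻¹) * N)) =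
      (2 * π) ^ 3 / 4 * (√(π / (2 * k)) ^ 3 * N) ^ 2 := by
  have h_sq : √(π / (2 * k)) ^ 2 = π / (2 * k) := sq_sqrt (by positivity)
  have h_mul : √(π / (2 * k)) * √(π / (2 * k)⁻¹) = π := by
    rw [← sqrt_mul (by positivity), show π / (2 * k) * (π / (2 * k)⁻¹) = π ^ 2 by field_simp,
      sqrt_sq pi_pos.le]
  calc (π / k) ^ 3 * (√(π / (2 * k)) ^ 3 / (2 * (2 * k)) * N *
        (√(π / (2 * k)⁻¹) ^ 3 / (2 * (2 * k)⁻¹) * N))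
      = (π / k) ^ 3 / 4 * (√(π / (2 * k)) * √(π / (2 * k)⁻¹)) ^ 3 * N ^ 2 := by
        field_simp
        ring
    _ = (2 * π) ^ 3 / 4 * ((√(π / (2 * k)) ^ 2) ^ 3 * N ^ 2) := by
        rw [h_mul, h_sq]
        field_simp
    _ = (2 * π) ^ 3 / 4 * (√(π / (2 * k)) ^ 3 * N) ^ 2 := by ring

/-- Equality in the uncertainty principle for Gaussian multivector functions. -/
theorem CFT_uncertainty_gaussian (C₀ : Cl3) (k : ℝ) (hk : 0 < k)
    (a : Fin 3 → ℝ) (ha : dot a a = 1)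
    (f : (Fin 3 → ℝ) → Cl3) (hf : f = fun x => Real.exp (-(k * dot x x)) • C₀)
    (F : ℝ) (hF : ∫ x : Fin 3 → ℝ, normSq (f x) = F) :
    (∫ x : Fin 3 → ℝ, (dot a x)^2 * normSq (f x)) *
      (∫ ω : Fin 3 → ℝ, (dot a ω)^2 * normSq (CFT f ω)) =
      (2 * π)^3 / 4 * F^2 := by
  subst hf hF
  have h_moment {c : ℝ} (hc : 0 < c) (M : ℝ) :
      ∫ x : Fin 3 → ℝ, dot a x ^ 2 * (exp (-c * ∑ i, x i ^ 2) * M) =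
        √(π / c) ^ 3 / (2 * c) * M := by
    simp_rw [← mul_assoc]
    rw [integral_mul_const, integral_sq_dot_mul_exp_neg_mul_sum_sq hc ha]
  simp only [normSq_gaussian, normSq_CFT_gaussian hk, mul_left_comm _ ((π / k) ^ 3),
    integral_const_mul, h_moment (by positivity : 0 < 2 * k),
    h_moment (by positivity : 0 < (2 * k)⁻¹), integral_mul_const, integral_exp_neg_mul_sum_sq,
    Fintype.card_fin]
  exact gaussian_uncertainty_constant hk _
end
end
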